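/- arXiv:1010.6261 — 2 statements merged into one kernel-verified Lean document; each statement's English description precedes it below -/
import Mathlib

section
/- Every minimal permutation of length 2n+1 with n+1 descents has exactly one occurrence of two consecutive descents, namely the descents 2i−1 and 2i for a unique 1 ≤ i ≤ n, and all its other descents are separated by ascents; equivalently, its ascent sequence is (2,…,2,3,2,…,2) with the entry 3 in position i. Hence 𝓕_{n+1}(2n+1) is the disjoint union of the sets 𝓜_{2n+1,2i} for 1 ≤ i ≤ n. -/
/-- `i` (1-based) is a descent of the word `w`, i.e. `1 ≤ i ≤ w.length - 1` and
`w_i > w_{i+1}` (1-based entries). -/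
def DescentAt (w : List ℕ) (i : ℕ) : Prop :=
  1 ≤ i ∧ i + 1 ≤ w.length ∧ w.getD i 0 < w.getD (i - 1) 0

instance (w : List ℕ) (i : ℕ) : Decidable (DescentAt w i) :=
  inferInstanceAs (Decidable (_ ∧ _ ∧ _))

/-- `i` (1-based) is an ascent of the word `w`. -/
def AscentAt (w : List ℕ) (i : ℕ) : Prop :=
  1 ≤ i ∧ i + 1 ≤ w.length ∧ w.getD (i - 1) 0 < w.getD i 0

instance (w : List ℕ) (i : ℕ) : Decidable (AscentAt w i) :=
  inferInstanceAs (Decidable (_ ∧ _ ∧ _))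

/-- The set of descent positions of `w`. -/
def descents (w : List ℕ) : Finset ℕ :=
  (Finset.range w.length).filter (fun i => DescentAt w i)

/-- `w` is a permutation of `[n] = {1,…,n}`, written as a word. -/
def IsPermWord (n : ℕ) (w : List ℕ) : Prop :=
  w.length = n ∧ w.Nodup ∧ ∀ x ∈ w, 1 ≤ x ∧ x ≤ n

/-- Two words of distinct entries are in the same relative order. -/
def SameRelOrder (u v : List ℕ) : Prop :=
  u.length = v.length ∧
    ∀ p q, p < u.length → q < u.length →
      (u.getD p 0 < u.getD q 0 ↔ v.getD p 0 < v.getD q 0)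

/-- `σ ≺ w`: the word `w` contains the pattern `σ`, i.e. `w` has a subsequence
in the same relative order as `σ`. -/
def ContainsPattern (σ w : List ℕ) : Prop :=
  ∃ s : List ℕ, s.Sublist w ∧ SameRelOrder s σ

/-- `w` is a minimal permutation with `d` descents: it has exactly `d` descents and
no strictly shorter permutation with exactly `d` descents occurs in it as a pattern. -/
def MinimalPerm (d : ℕ) (w : List ℕ) : Prop :=
  (descents w).card = d ∧
    ∀ (m : ℕ) (σ : List ℕ), IsPermWord m σ → m < w.length →
      (descents σ).card = d → ¬ ContainsPattern σ w

/-- `w` is a minimal permutation (with its own number of descents). -/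
def IsMinimal (w : List ℕ) : Prop :=
  MinimalPerm (descents w).card w

/-- The set `𝓕_d(n)` of minimal permutations of length `n` with `d` descents. -/
def minimalPerms (d n : ℕ) : Set (List ℕ) :=
  {w | IsPermWord n w ∧ MinimalPerm d w}

/-- `f_d(n) = |𝓕_d(n)|`. -/
noncomputable def fCount (d n : ℕ) : ℕ :=
  (minimalPerms d n).ncard

/-- `w` has ascent sequence `a`: `w` decomposes into maximal strictly decreasing
runs whose lengths, from left to right, are the entries of `a` (maximality is
expressed by the junctions between consecutive runs being ascents). -/
def HasAscentSeq (w a : List ℕ) : Prop :=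
  ∃ bs : List (List ℕ), bs.flatten = w ∧ bs.map List.length = a ∧
    (∀ b ∈ bs, b ≠ [] ∧ List.Chain' (fun x y => x > y) b) ∧
    List.Chain' (fun b c => ∃ x ∈ b.getLast?, ∃ y ∈ c.head?, x < y) bs

/-- The set `𝓕_{a₁,…,a_k}(n)` of minimal permutations of length `n` with
ascent sequence `a = (a₁,…,a_k)`. -/
def minimalPermsAsc (n : ℕ) (a : List ℕ) : Set (List ℕ) :=
  {w | IsPermWord n w ∧ IsMinimal w ∧ HasAscentSeq w a}

/-- `F_{a₁,…,a_k}(n) = |𝓕_{a₁,…,a_k}(n)|`. -/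
noncomputable def FCount (n : ℕ) (a : List ℕ) : ℕ :=
  (minimalPermsAsc n a).ncard

/-- A standard filling of a given cell set by `1,…,N`: zero off the cells,
a bijection from the cells onto `{1,…,N}`, strictly increasing along rows
(second coordinate) and columns (first coordinate). -/
def IsTableauOn (cell : ℕ → ℕ → Prop) (N : ℕ) (T : ℕ → ℕ → ℕ) : Prop :=
  (∀ r c, ¬ cell r c → T r c = 0) ∧
  (∀ r c, cell r c → 1 ≤ T r c ∧ T r c ≤ N) ∧
  (∀ r c r' c', cell r c → cell r' c' → T r c = T r' c' → r = r' ∧ c = c') ∧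
  (∀ v, 1 ≤ v → v ≤ N → ∃ r c, cell r c ∧ T r c = v) ∧
  (∀ r c, cell r c → cell r (c + 1) → T r c < T r (c + 1)) ∧
  (∀ r c, cell r c → cell (r + 1) c → T r c < T (r + 1) c)

/-- The cells of the skew shape `λ/μ` (rows indexed from `0` downward,
columns from `0` rightward): row `r` contains columns `μ_r ≤ c < λ_r`. -/
def skewCell (l m : List ℕ) (r c : ℕ) : Prop :=
  r < l.length ∧ m.getD r 0 ≤ c ∧ c < l.getD r 0

/-- A standard skew Young tableau of shape `λ/μ`. -/
def IsSkewSYT (l m : List ℕ) (T : ℕ → ℕ → ℕ) : Prop :=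
  IsTableauOn (skewCell l m) (l.sum - m.sum) T

/-- `f^{λ/μ}`, the number of standard skew Young tableaux of shape `λ/μ`. -/
noncomputable def skewSYTCount (l m : List ℕ) : ℕ :=
  Nat.card {T : ℕ → ℕ → ℕ // IsSkewSYT l m T}

/-- The row index of the top cell of column `c` in the 2-regular skew shape
with column lengths `a₁,…,a_k` (columns normalized so that the last column
starts in row `0`; consecutive columns overlap in exactly two rows). -/
def colTop (a : List ℕ) (c : ℕ) : ℕ :=
  (a.drop (c + 1)).sum - 2 * (a.length - 1 - c)

/-- The cells of the 2-regular skew shape with column lengths `a₁,…,a_k`: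
column `c` occupies the `a_c` rows starting at `colTop a c`, so that any two
consecutive columns overlap in exactly two rows. -/
def twoRegCell (a : List ℕ) (r c : ℕ) : Prop :=
  c < a.length ∧ colTop a c ≤ r ∧ r < colTop a c + a.getD c 0

/-- A 2-regular skew tableau with column lengths `a₁,…,a_k`: a standard filling
of the 2-regular skew shape by `1,…,a₁+⋯+a_k`. -/
def Is2RegularTableau (a : List ℕ) (T : ℕ → ℕ → ℕ) : Prop :=
  IsTableauOn (twoRegCell a) a.sum T

/-- `𝓜_{2n+1,2i}`: minimal permutations of length `2n+1` with `n+1` descents whose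
unique pair of consecutive descents is `(2i-1, 2i)`. -/
def Mset (n i : ℕ) : Set (List ℕ) :=
  {w | IsPermWord (2 * n + 1) w ∧ MinimalPerm (n + 1) w ∧
    DescentAt w (2 * i - 1) ∧ DescentAt w (2 * i) ∧
    ∀ j, DescentAt w j → DescentAt w (j + 1) → j = 2 * i - 1}

/-- Elementary Knuth transformations on words of distinct integers. -/
inductive KnuthStep : List ℕ → List ℕ → Prop
  | k1 (u v : List ℕ) (x y z : ℕ) (hxy : x < y) (hyz : y < z) :
      KnuthStep (u ++ [x, z, y] ++ v) (u ++ [z, x, y] ++ v)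
  | k2 (u v : List ℕ) (x y z : ℕ) (hxy : x < y) (hyz : y < z) :
      KnuthStep (u ++ [y, x, z] ++ v) (u ++ [y, z, x] ++ v)

/-- Knuth equivalence of words. -/
def KnuthEquiv : List ℕ → List ℕ → Prop := Relation.EqvGen KnuthStep

/-!
Cut `w` into its maximal decreasing runs. Every junction between runs is an ascent, so the number
of descents is the length minus the number of runs, and the descent positions are exactly the
positions that are not partial sums of the run lengths. A run consisting of a single entry can be
deleted without changing the number of descents, so in a minimal permutation all runs have
length at least `2`. With `n + 1` descents in length `2n + 1` there are `n` runs of total length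
`2n + 1`, hence all runs have length `2` except one of length `3`; reading off the descents of
this shape gives the pair of consecutive descents `(2i - 1, 2i)`.
-/

theorem mem_descents {w : List ℕ} {m : ℕ} : m ∈ descents w ↔ DescentAt w m := by
  simp only [descents, Finset.mem_filter, Finset.mem_range, and_iff_right_iff_imp]
  exact fun h => h.2.1

theorem descentAt_append_of_lt {u v : List ℕ} {m : ℕ} (hm : m < u.length) :
    DescentAt (u ++ v) m ↔ DescentAt u m := by
  unfold DescentAt
  rw [List.getD_append _ _ _ _ hm, List.getD_append _ _ _ _ (by omega), List.length_append]
  constructor <;> rintro ⟨h1, -, h3⟩ <;> exact ⟨h1, by omega, h3⟩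

theorem descentAt_append_of_length_lt {u v : List ℕ} {m : ℕ} (hm : u.length < m) :
    DescentAt (u ++ v) m ↔ DescentAt v (m - u.length) := by
  unfold DescentAt
  rw [List.getD_append_right _ _ _ _ hm.le, List.getD_append_right _ _ _ _ (by omega),
    List.length_append, show m - 1 - u.length = m - u.length - 1 by omega]
  constructor <;> rintro ⟨-, h2, h3⟩ <;> exact ⟨by omega, by omega, h3⟩

theorem descents_of_isChain_gt {b : List ℕ} (hb : b.IsChain (· > ·)) :
    descents b = Finset.Ioo 0 b.length := by
  ext m
  rw [mem_descents, Finset.mem_Ioo]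
  refine ⟨fun h => ⟨h.1, by have := h.2.1; omega⟩, fun ⟨h1, h2⟩ => ⟨h1, h2, ?_⟩⟩
  have := List.isChain_iff_getElem.mp hb (m - 1) (by omega)
  rw [List.getD_eq_getElem _ _ h2, List.getD_eq_getElem _ _ (by omega)]
  simpa only [show m - 1 + 1 = m by omega] using this

theorem descents_append {u v : List ℕ} (h : ¬ DescentAt (u ++ v) u.length) :
    descents (u ++ v) = descents u ∪ (descents v).map (addLeftEmbedding u.length) := by
  ext m
  simp only [Finset.mem_union, Finset.mem_map, addLeftEmbedding_apply, mem_descents]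
  rcases lt_trichotomy m u.length with hm | rfl | hm
  · rw [descentAt_append_of_lt hm]
    refine ⟨Or.inl, ?_⟩
    rintro (h | ⟨k, hk, rfl⟩)
    · exact h
    · exact absurd hk.1 (by omega)
  · refine ⟨fun h' => absurd h' h, ?_⟩
    rintro (h | ⟨k, hk, hk'⟩)
    · exact absurd h.2.1 (by omega)
    · exact absurd hk.1 (by omega)
  · rw [descentAt_append_of_length_lt hm]
    refine ⟨fun h => Or.inr ⟨_, h, by omega⟩, ?_⟩
    rintro (h | ⟨k, hk, rfl⟩)
    · exact absurd h.2.1 (by omega)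
    · simpa using hk

theorem card_descents_append {u v : List ℕ} (h : ¬ DescentAt (u ++ v) u.length) :
    (descents (u ++ v)).card = (descents u).card + (descents v).card := by
  rw [descents_append h, Finset.card_union_of_disjoint, Finset.card_map]
  refine Finset.disjoint_left.mpr fun m hu hv => ?_
  obtain ⟨k, hk, rfl⟩ := Finset.mem_map.mp hv
  have := (mem_descents.mp hu).2.1
  have := (mem_descents.mp hk).1
  rw [addLeftEmbedding_apply] at *
  omega

theorem List.IsChain.append_of_append_cons {α : Type*} {R : α → α → Prop} {l₁ l₂ : List α}
    {m : α} (htrans : ∀ a c, R a m → R m c → R a c) (h : (l₁ ++ m :: l₂).IsChain R) :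
    (l₁ ++ l₂).IsChain R := by
  obtain ⟨h₁, hm₂, hjoin⟩ := List.isChain_append.mp h
  obtain ⟨hm, h₂⟩ := List.isChain_cons.mp hm₂
  exact List.isChain_append.mpr ⟨h₁, h₂, fun a ha c hc =>
    htrans a c (hjoin a ha m rfl) (hm c hc)⟩

/-- `HasAscentSeq w a` unfolds to
`∃ bs, bs.flatten = w ∧ bs.map List.length = a ∧ IsRunSplit bs`. -/
def IsRunSplit (bs : List (List ℕ)) : Prop :=
  (∀ b ∈ bs, b ≠ [] ∧ b.IsChain (· > ·)) ∧
    bs.IsChain (fun b c => ∃ x ∈ b.getLast?, ∃ y ∈ c.head?, x < y)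

namespace IsRunSplit

variable {b : List ℕ} {bs : List (List ℕ)}

theorem of_cons (h : IsRunSplit (b :: bs)) : IsRunSplit bs :=
  ⟨fun c hc => h.1 c (List.mem_cons_of_mem b hc), h.2.tail⟩

theorem not_descentAt_length (h : IsRunSplit (b :: bs)) :
    ¬ DescentAt (b ++ bs.flatten) b.length := by
  cases bs with
  | nil => simp [DescentAt]
  | cons c cs =>
    obtain ⟨x, hx, y, hy, hxy⟩ := (List.isChain_cons_cons.mp h.2).1
    obtain ⟨b', rfl⟩ := List.getLast?_eq_some_iff.mp hx
    obtain ⟨c', rfl⟩ := List.head?_eq_some_iff.mp hy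
    simpa [DescentAt] using hxy.le

theorem card_descents_add_length (h : IsRunSplit bs) :
    (descents bs.flatten).card + bs.length = bs.flatten.length := by
  induction bs with
  | nil => simp [descents]
  | cons b bs ih =>
    have hb := h.1 b List.mem_cons_self
    have := List.length_pos_iff.mpr hb.1
    rw [List.flatten_cons, card_descents_append h.not_descentAt_length,
      descents_of_isChain_gt hb.2, Nat.card_Ioo, List.length_append, List.length_cons,
      ← ih h.of_cons]
    omega

theorem mem_descents_flatten_iff (h : IsRunSplit bs) {m : ℕ} (hm : m < bs.flatten.length) :
    m ∈ descents bs.flatten ↔ m ∉ (bs.map List.length).partialSums := by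
  induction bs generalizing m with
  | nil => simp at hm
  | cons b bs ih =>
    have hb := h.1 b List.mem_cons_self
    rw [List.flatten_cons] at hm ⊢
    rw [descents_append h.not_descentAt_length, descents_of_isChain_gt hb.2, List.map_cons,
      List.partialSums_cons]
    simp only [Finset.mem_union, Finset.mem_Ioo, Finset.mem_map, addLeftEmbedding_apply,
      List.mem_cons, List.mem_map, not_or]
    have hb₀ := List.length_pos_iff.mpr hb.1
    rcases lt_or_ge m b.length with hmb | hmb
    · refine ⟨fun _ => ⟨by omega, ?_⟩, fun h' => Or.inl ⟨by omega, hmb⟩⟩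
      rintro ⟨a, -, rfl⟩
      omega
    · obtain ⟨k, rfl⟩ := Nat.exists_eq_add_of_le hmb
      rw [List.length_append] at hm
      simp only [Nat.add_left_cancel_iff, exists_eq_right]
      rw [ih h.of_cons (by omega)]
      constructor
      · rintro (h' | h')
        · omega
        · exact ⟨by omega, h'⟩
      · exact fun h' => Or.inr h'.2

theorem append_of_append_singleton_cons {l₁ l₂ : List (List ℕ)} {x : ℕ}
    (h : IsRunSplit (l₁ ++ [x] :: l₂)) : IsRunSplit (l₁ ++ l₂) := by
  refine ⟨fun c hc => h.1 c ?_, h.2.append_of_append_cons ?_⟩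
  · simp only [List.mem_append, List.mem_cons] at hc ⊢; tauto
  · rintro a c ⟨p, hp, y, hy, hpy⟩ ⟨y', hy', q, hq, hyq⟩
    simp only [List.head?_cons, List.getLast?_singleton, Option.mem_def, Option.some_inj] at hy hy'
    exact ⟨p, hp, q, hq, by omega⟩

end IsRunSplit

theorem isRunSplit_splitBy {w : List ℕ} (hw : w.Nodup) :
    IsRunSplit (w.splitBy fun x y => decide (y < x)) := by
  refine ⟨fun b hb => ⟨List.ne_nil_of_mem_splitBy hb, ?_⟩, ?_⟩
  · exact (List.isChain_of_mem_splitBy hb).imp fun x y h => by simpa using h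
  · have hnd : (w.splitBy fun x y => decide (y < x)).flatten.Nodup := by
      rwa [List.flatten_splitBy]
    have hdisj := (List.nodup_flatten.mp hnd).2.isChain
    refine List.isChain_iff_getElem.mpr fun i hi => ?_
    obtain ⟨ha, hb, hle⟩ := List.isChain_iff_getElem.mp
      (List.isChain_getLast_head_splitBy (fun x y => decide (y < x)) w) i hi
    refine ⟨_, List.getLast?_eq_some_getLast ha, _, List.head?_eq_some_head hb, ?_⟩
    simp only [decide_eq_false_iff_not, not_lt] at hle
    refine lt_of_le_of_ne hle fun heq => ?_
    exact List.isChain_iff_getElem.mp hdisj i hi (List.getLast_mem ha) (heq ▸ List.head_mem hb)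

theorem SameRelOrder.descents_eq {s σ : List ℕ} (h : SameRelOrder s σ) :
    descents s = descents σ := by
  ext i
  simp only [mem_descents, DescentAt, ← h.1]
  exact and_congr_right fun _ => and_congr_right fun h₂ => h.2 i (i - 1) h₂ (by omega)

theorem exists_isPermWord_sameRelOrder {s : List ℕ} (hs : s.Nodup) :
    ∃ σ, IsPermWord s.length σ ∧ SameRelOrder s σ := by
  set rank : ℕ → ℕ := fun x => (s.toFinset.filter (· ≤ x)).card
  have hrank : StrictMonoOn rank {x | x ∈ s} := fun x _ y hy hxy => by
    refine Finset.card_lt_card (Finset.ssubset_iff_of_subset ?_ |>.mpr ⟨y, ?_, ?_⟩)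
    · intro z hz
      simp only [Finset.mem_filter] at hz ⊢
      exact ⟨hz.1, hz.2.trans hxy.le⟩
    · simpa using hy
    · simp [hxy]
  refine ⟨s.map rank, ⟨List.length_map _, hs.map_on fun x hx y hy => hrank.injOn hx hy, ?_⟩,
    List.length_map _ |>.symm, fun p q hp hq => ?_⟩
  · simp only [List.mem_map]
    rintro _ ⟨x, hx, rfl⟩
    refine ⟨Finset.card_pos.mpr ⟨x, by simpa using hx⟩, ?_⟩
    exact (Finset.card_filter_le _ _).trans (List.toFinset_card_le s)
  · rw [List.getD_eq_getElem _ _ hp, List.getD_eq_getElem _ _ hq,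
      List.getD_eq_getElem _ _ (by simpa using hp), List.getD_eq_getElem _ _ (by simpa using hq),
      List.getElem_map, List.getElem_map]
    exact (hrank.lt_iff_lt (List.getElem_mem hp) (List.getElem_mem hq)).symm

theorem MinimalPerm.card_descents_ne_of_sublist {d : ℕ} {w s : List ℕ} (hmin : MinimalPerm d w)
    (hw : w.Nodup) (hs : s.Sublist w) (hlt : s.length < w.length) : (descents s).card ≠ d := by
  intro hd
  obtain ⟨σ, hσ, hsσ⟩ := exists_isPermWord_sameRelOrder (hs.nodup hw)
  exact hmin.2 _ σ hσ hlt (hsσ.descents_eq ▸ hd) ⟨s, hs, hsσ⟩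

theorem IsRunSplit.two_le_length_of_minimalPerm {d : ℕ} {bs : List (List ℕ)} (h : IsRunSplit bs)
    (hmin : MinimalPerm d bs.flatten) (hnd : bs.flatten.Nodup) : ∀ b ∈ bs, 2 ≤ b.length := by
  intro b hb
  by_contra hlt
  obtain ⟨x, rfl⟩ : ∃ x, b = [x] :=
    List.length_eq_one_iff.mp (by have := List.length_pos_iff.mpr (h.1 b hb).1; omega)
  obtain ⟨l₁, l₂, rfl⟩ := List.append_of_mem hb
  have h' := h.append_of_append_singleton_cons
  refine hmin.card_descents_ne_of_sublist hnd (s := (l₁ ++ l₂).flatten) ?_ ?_ ?_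
  · exact List.Sublist.flatten ((List.sublist_cons_self _ _).append_left l₁)
  · simp
  · have hw := h.card_descents_add_length
    have hs := h'.card_descents_add_length
    rw [hmin.1] at hw
    simp only [List.flatten_append, List.flatten_cons, List.length_append, List.length_cons,
      List.length_nil] at hw hs ⊢
    omega

theorem List.eq_replicate_two_of_sum_eq {l : List ℕ} (h : ∀ x ∈ l, 2 ≤ x)
    (hs : l.sum = 2 * l.length) : l = List.replicate l.length 2 := by
  induction l with
  | nil => rfl
  | cons a l ih =>
    have hl := List.card_nsmul_le_sum l 2 fun x hx => h x (List.mem_cons_of_mem a hx)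
    have ha := h a List.mem_cons_self
    simp only [List.sum_cons, List.length_cons, smul_eq_mul] at hs hl
    rw [List.length_cons, List.replicate_succ, show a = 2 by omega,
      ih (fun x hx => h x (List.mem_cons_of_mem a hx)) (by omega)]
    simp

theorem List.exists_eq_replicate_two_append_three {l : List ℕ} (h : ∀ x ∈ l, 2 ≤ x)
    (hs : l.sum = 2 * l.length + 1) :
    ∃ k r, l = List.replicate k 2 ++ 3 :: List.replicate r 2 := by
  induction l with
  | nil => simp at hs
  | cons a l ih =>
    have hl' : ∀ x ∈ l, 2 ≤ x := fun x hx => h x (List.mem_cons_of_mem a hx)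
    have hl := List.card_nsmul_le_sum l 2 hl'
    have ha := h a List.mem_cons_self
    simp only [List.sum_cons, List.length_cons, smul_eq_mul] at hs hl
    obtain rfl | rfl : a = 2 ∨ a = 3 := by omega
    · obtain ⟨k, r, rfl⟩ := ih hl' (by omega)
      exact ⟨k + 1, r, by simp [List.replicate_succ]⟩
    · exact ⟨0, l.length, by rw [← List.eq_replicate_two_of_sum_eq hl' (by omega)]; rfl⟩

theorem List.mem_partialSums_replicate {k c m : ℕ} :
    m ∈ (List.replicate k c).partialSums ↔ ∃ j ≤ k, m = j * c := by
  simp only [List.mem_iff_getElem, List.getElem_partialSums, List.length_partialSums,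
    List.length_replicate, List.take_replicate, List.sum_replicate, smul_eq_mul]
  constructor
  · rintro ⟨j, hj, rfl⟩
    exact ⟨j, by omega, by rw [Nat.min_eq_left (by omega)]⟩
  · rintro ⟨j, hj, rfl⟩
    exact ⟨j, by omega, by rw [Nat.min_eq_left hj]⟩

theorem mem_partialSums_replicate_two_append_three {k r m : ℕ} :
    m ∈ (List.replicate k 2 ++ 3 :: List.replicate r 2).partialSums ↔
      (m % 2 = 0 ∧ m ≤ 2 * k) ∨ (m % 2 = 1 ∧ 2 * k + 3 ≤ m ∧ m ≤ 2 * k + 2 * r + 3) := by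
  simp only [List.partialSums_append, List.partialSums_cons, List.tail_cons, List.mem_append,
    List.mem_map, List.mem_partialSums_replicate, List.sum_replicate, smul_eq_mul]
  constructor
  · rintro (⟨j, hj, rfl⟩ | ⟨_, ⟨x, ⟨j, hj, rfl⟩, rfl⟩, rfl⟩) <;> omega
  · rintro (⟨h₁, h₂⟩ | ⟨h₁, h₂, h₃⟩)
    · exact Or.inl ⟨m / 2, by omega, by omega⟩
    · exact Or.inr ⟨3 + (m - 2 * k - 3) / 2 * 2, ⟨_, ⟨(m - 2 * k - 3) / 2, by omega, rfl⟩, rfl⟩,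
        by omega⟩

theorem HasAscentSeq.descentAt_replicate_two_append_three {w : List ℕ} {k r : ℕ}
    (h : HasAscentSeq w (List.replicate k 2 ++ 3 :: List.replicate r 2)) :
    DescentAt w (2 * k + 1) ∧ DescentAt w (2 * k + 2) ∧
      ∀ j, DescentAt w j → DescentAt w (j + 1) → j = 2 * k + 1 := by
  obtain ⟨bs, rfl, hlengths, hbs⟩ : ∃ bs : List (List ℕ), bs.flatten = w ∧ _ ∧ IsRunSplit bs := h
  have hlen : bs.flatten.length = 2 * k + 2 * r + 3 := by
    simp only [List.length_flatten, hlengths, List.sum_append, List.sum_cons, List.sum_replicate,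
      smul_eq_mul]
    omega
  have hdesc : ∀ m < 2 * k + 2 * r + 3, DescentAt bs.flatten m ↔
      ¬((m % 2 = 0 ∧ m ≤ 2 * k) ∨ (m % 2 = 1 ∧ 2 * k + 3 ≤ m ∧ m ≤ 2 * k + 2 * r + 3)) :=
    fun m hm => by
      rw [← mem_descents, hbs.mem_descents_flatten_iff (hlen ▸ hm), hlengths,
        mem_partialSums_replicate_two_append_three]
  refine ⟨(hdesc _ (by omega)).mpr (by omega), (hdesc _ (by omega)).mpr (by omega),
    fun j hj hj' => ?_⟩
  have := hj'.2.1
  have := (hdesc j (by omega)).mp hj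
  have := (hdesc (j + 1) (by omega)).mp hj'
  omega

theorem exists_hasAscentSeq_of_mem_minimalPerms {n : ℕ} {w : List ℕ}
    (hw : w ∈ minimalPerms (n + 1) (2 * n + 1)) :
    ∃ k r, k + r + 1 = n ∧ HasAscentSeq w (List.replicate k 2 ++ 3 :: List.replicate r 2) := by
  obtain ⟨⟨hlen, hnd, -⟩, hmin⟩ := hw
  obtain ⟨bs, rfl, hbs⟩ : ∃ bs : List (List ℕ), bs.flatten = w ∧ IsRunSplit bs :=
    ⟨_, List.flatten_splitBy _ w, isRunSplit_splitBy hnd⟩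
  have hcount := hbs.card_descents_add_length
  rw [hmin.1, hlen] at hcount
  have htwo : ∀ x ∈ bs.map List.length, 2 ≤ x := by
    simpa using hbs.two_le_length_of_minimalPerm hmin hnd
  obtain ⟨k, r, hkr⟩ := List.exists_eq_replicate_two_append_three htwo
    (by rw [← List.length_flatten, List.length_map]; omega)
  refine ⟨k, r, ?_, bs, rfl, hkr, hbs⟩
  have := congrArg List.length hkr
  simp only [List.length_map, List.length_append, List.length_replicate, List.length_cons] at this
  omega

theorem mem_Mset_iff_of_hasAscentSeq {n i k r : ℕ} {w : List ℕ}
    (hw : w ∈ minimalPerms (n + 1) (2 * n + 1))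
    (h : HasAscentSeq w (List.replicate k 2 ++ 3 :: List.replicate r 2)) (hi : 1 ≤ i) :
    w ∈ Mset n i ↔ i = k + 1 := by
  obtain ⟨hd₁, hd₂, hunique⟩ := h.descentAt_replicate_two_append_three
  constructor
  · rintro ⟨-, -, -, -, hunique'⟩
    have := hunique' _ hd₁ hd₂
    omega
  · rintro rfl
    refine ⟨hw.1, hw.2, ?_, hd₂, fun j hj hj' => (hunique j hj hj').trans (by omega)⟩
    rwa [show 2 * (k + 1) - 1 = 2 * k + 1 by omega]

theorem Fset_disjoint_union_Mset_general (n : ℕ) :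
    (∀ w ∈ minimalPerms (n + 1) (2 * n + 1),
        ∃! i, i ∈ Finset.Icc 1 n ∧ w ∈ Mset n i) ∧
      ∀ i ∈ Finset.Icc 1 n, ∀ w : List ℕ,
        w ∈ Mset n i ↔
          w ∈ minimalPerms (n + 1) (2 * n + 1) ∧
            HasAscentSeq w (List.replicate (i - 1) 2 ++ 3 :: List.replicate (n - i) 2) := by
  refine ⟨fun w hw => ?_, fun i hi w => ?_⟩
  · obtain ⟨k, r, rfl, h⟩ := exists_hasAscentSeq_of_mem_minimalPerms hw
    refine ⟨k + 1, ⟨Finset.mem_Icc.mpr ⟨by omega, by omega⟩,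
      (mem_Mset_iff_of_hasAscentSeq hw h (by omega)).mpr rfl⟩, fun i ⟨hi, hwi⟩ => ?_⟩
    exact (mem_Mset_iff_of_hasAscentSeq hw h (Finset.mem_Icc.mp hi).1).mp hwi
  · obtain ⟨hi₁, -⟩ := Finset.mem_Icc.mp hi
    constructor
    · intro hwi
      have hw : w ∈ minimalPerms (n + 1) (2 * n + 1) := ⟨hwi.1, hwi.2.1⟩
      obtain ⟨k, r, rfl, h⟩ := exists_hasAscentSeq_of_mem_minimalPerms hw
      obtain rfl := (mem_Mset_iff_of_hasAscentSeq hw h hi₁).mp hwi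
      refine ⟨hw, ?_⟩
      rwa [show k + 1 - 1 = k by omega, show k + r + 1 - (k + 1) = r by omega]
    · rintro ⟨hw, h⟩
      exact (mem_Mset_iff_of_hasAscentSeq hw h hi₁).mpr (by omega)

/-- every minimal permutation of length `2n+1` with `n+1` descents lies in
exactly one of the sets `𝓜_{2n+1,2i}` for `1 ≤ i ≤ n` (so `𝓕_{n+1}(2n+1)` is their
disjoint union), and membership in `𝓜_{2n+1,2i}` is equivalent to having ascent sequence
`(2,…,2,3,2,…,2)` with the `3` in position `i`. -/
theorem Fset_disjoint_union_Mset (n : ℕ) (hn : 1 ≤ n) :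
    (∀ w ∈ minimalPerms (n + 1) (2 * n + 1),
        ∃! i, i ∈ Finset.Icc 1 n ∧ w ∈ Mset n i) ∧
      ∀ i ∈ Finset.Icc 1 n, ∀ w : List ℕ,
        w ∈ Mset n i ↔
          w ∈ minimalPerms (n + 1) (2 * n + 1) ∧
            HasAscentSeq w (List.replicate (i - 1) 2 ++ 3 :: List.replicate (n - i) 2) :=
  Fset_disjoint_union_Mset_general n
end

section
/- For n ≥ 1 and 1 ≤ i ≤ n, the number of standard skew Young tableaux of skew shape (n, n, i)/(i−1) equals f^{(n,n,i)/(i−1)} = binom(2n+1, n−1)·binom(n−1, i−1). -/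
/-!
Aitken's formula for three-row skew shapes: `f^{λ/μ} = N! · det (1 / (λ_i - i - μ_j + j)!)`,
where `1 / k! = 0` for `k < 0`. Induct on `N`: the entry `1` of a standard tableau sits at the
start `(i, μ_i)` of some row, and erasing it leaves a tableau of shape `λ / (μ + e_i)` when that
cell is a corner. On the determinant side, raising `μ_j` by one for each column `j` in turn and
summing multiplies the determinant by `N`, while the terms of rows whose first cell is not a
corner vanish (a zero block, or two equal columns). For `λ = (n, n, i)` and `μ = (i - 1)` the
matrix has a single zero entry, and expanding the determinant gives the product of binomials.
-/

open scoped Nat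
open Function

def eraseCell (cell : ℕ → ℕ → Prop) (r₀ c₀ : ℕ) (r c : ℕ) : Prop :=
  cell r c ∧ ¬(r = r₀ ∧ c = c₀)

noncomputable def insertOne (cell : ℕ → ℕ → Prop) (r₀ c₀ : ℕ) (T : ℕ → ℕ → ℕ) (r c : ℕ) : ℕ :=
  open Classical in
  if r = r₀ ∧ c = c₀ then 1 else if cell r c then T r c + 1 else 0

namespace IsTableauOn

variable {cell : ℕ → ℕ → Prop} {N : ℕ} {T : ℕ → ℕ → ℕ} {r c r₀ c₀ : ℕ}

theorem cell_of_eq_one (hT : IsTableauOn cell N T) (h1 : T r c = 1) : cell r c := by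
  by_contra h
  rw [hT.1 r c h] at h1
  exact zero_ne_one h1

theorem not_cell_left_of_eq_one (hT : IsTableauOn cell N T) (h1 : T r (c + 1) = 1) :
    ¬ cell r c := fun hc => by
  have h₁ := hT.cell_of_eq_one h1
  obtain ⟨-, hbd, -, -, hrow, -⟩ := hT
  have := hrow r c hc h₁
  have := (hbd r c hc).1
  omega

theorem not_cell_above_of_eq_one (hT : IsTableauOn cell N T) (h1 : T (r + 1) c = 1) :
    ¬ cell r c := fun hc => by
  have h₁ := hT.cell_of_eq_one h1
  obtain ⟨-, hbd, -, -, -, hcol⟩ := hT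
  have := hcol r c hc h₁
  have := (hbd r c hc).1
  omega

theorem eraseCell_sub_one (hT : IsTableauOn cell (N + 1) T) (h1 : T r₀ c₀ = 1) :
    IsTableauOn (eraseCell cell r₀ c₀) N (fun r c => T r c - 1) := by
  have h₀ := hT.cell_of_eq_one h1
  obtain ⟨hoff, hbd, hinj, hsurj, hrow, hcol⟩ := hT
  have two_le : ∀ r c, eraseCell cell r₀ c₀ r c → 2 ≤ T r c := by
    rintro r c ⟨hc, hne⟩
    have := (hbd r c hc).1
    by_contra! hlt
    exact hne (hinj r c r₀ c₀ hc h₀ (by omega))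
  refine ⟨fun r c hc => ?_, fun r c hc => ?_, fun r c r' c' hc hc' he => ?_,
    fun v hv1 hvN => ?_, fun r c hc hc' => ?_, fun r c hc hc' => ?_⟩ <;> dsimp only at *
  · by_cases h : cell r c
    · obtain ⟨rfl, rfl⟩ := not_not.mp (not_and.mp hc h)
      simp [h1]
    · simp [hoff r c h]
  · have := two_le r c hc
    have := hbd r c hc.1
    omega
  · have := two_le r c hc
    have := two_le r' c' hc'
    exact hinj r c r' c' hc.1 hc'.1 (by omega)
  · obtain ⟨r, c, hc, hv⟩ := hsurj (v + 1) (by omega) (by omega)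
    refine ⟨r, c, ⟨hc, ?_⟩, by omega⟩
    rintro ⟨rfl, rfl⟩
    omega
  · have := hrow r c hc.1 hc'.1
    have := two_le r c hc
    omega
  · have := hcol r c hc.1 hc'.1
    have := two_le r c hc
    omega

theorem insertOne_of_eraseCell (hS : IsTableauOn (eraseCell cell r₀ c₀) N T) (h₀ : cell r₀ c₀)
    (hleft : ∀ c, c + 1 = c₀ → ¬ cell r₀ c) (habove : ∀ r, r + 1 = r₀ → ¬ cell r c₀) :
    IsTableauOn cell (N + 1) (insertOne cell r₀ c₀ T) := by
  obtain ⟨hoff, hbd, hinj, hsurj, hrow, hcol⟩ := hS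
  have at_self : ∀ r c, r = r₀ ∧ c = c₀ → insertOne cell r₀ c₀ T r c = 1 := fun r c h => by
    simp [insertOne, h]
  have of_ne : ∀ r c, cell r c → ¬(r = r₀ ∧ c = c₀) →
      insertOne cell r₀ c₀ T r c = T r c + 1 ∧ 1 ≤ T r c ∧ T r c ≤ N := fun r c hc hne =>
    ⟨by simp [insertOne, hne, hc], hbd r c ⟨hc, hne⟩⟩
  refine ⟨fun r c hc => ?_, fun r c hc => ?_, fun r c r' c' hc hc' he => ?_,
    fun v hv1 hvN => ?_, fun r c hc hc' => ?_, fun r c hc hc' => ?_⟩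
  · have : ¬(r = r₀ ∧ c = c₀) := by rintro ⟨rfl, rfl⟩; exact hc h₀
    simp [insertOne, this, hc]
  · by_cases h : r = r₀ ∧ c = c₀
    · simp [insertOne, h]
    · have := of_ne r c hc h
      omega
  · by_cases h : r = r₀ ∧ c = c₀ <;> by_cases h' : r' = r₀ ∧ c' = c₀
    · exact ⟨h.1.trans h'.1.symm, h.2.trans h'.2.symm⟩
    · obtain ⟨e, hpos, -⟩ := of_ne r' c' hc' h'
      rw [at_self r c h, e] at he
      omega
    · obtain ⟨e, hpos, -⟩ := of_ne r c hc h
      rw [at_self r' c' h', e] at he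
      omega
    · have := of_ne r c hc h
      have := of_ne r' c' hc' h'
      exact hinj r c r' c' ⟨hc, h⟩ ⟨hc', h'⟩ (by omega)
  · obtain rfl | hv := eq_or_lt_of_le hv1
    · exact ⟨r₀, c₀, h₀, by simp [insertOne]⟩
    · obtain ⟨r, c, ⟨hc, h⟩, hT⟩ := hsurj (v - 1) (by omega) (by omega)
      have := of_ne r c hc h
      exact ⟨r, c, hc, by omega⟩
  · have h' : ¬(r = r₀ ∧ c + 1 = c₀) := by rintro ⟨rfl, hc₀⟩; exact hleft c hc₀ hc
    have := of_ne r (c + 1) hc' h'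
    by_cases h : r = r₀ ∧ c = c₀
    · rw [at_self _ _ h]
      omega
    · have := of_ne r c hc h
      have := hrow r c ⟨hc, h⟩ ⟨hc', h'⟩
      omega
  · have h' : ¬(r + 1 = r₀ ∧ c = c₀) := by rintro ⟨hr₀, rfl⟩; exact habove r hr₀ hc
    have := of_ne (r + 1) c hc' h'
    by_cases h : r = r₀ ∧ c = c₀
    · rw [at_self _ _ h]
      omega
    · have := of_ne r c hc h
      have := hcol r c ⟨hc, h⟩ ⟨hc', h'⟩
      omega

end IsTableauOn

section Counting

variable (cell : ℕ → ℕ → Prop)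

theorem card_tableauOn_eq_one_eq (N r₀ c₀ : ℕ) (h₀ : cell r₀ c₀)
    (hleft : ∀ c, c + 1 = c₀ → ¬ cell r₀ c) (habove : ∀ r, r + 1 = r₀ → ¬ cell r c₀) :
    Nat.card {T // IsTableauOn cell (N + 1) T ∧ T r₀ c₀ = 1}
      = Nat.card {T // IsTableauOn (eraseCell cell r₀ c₀) N T} := by
  refine Nat.card_congr
    { toFun := fun T => ⟨fun r c => T.1 r c - 1, T.2.1.eraseCell_sub_one T.2.2⟩
      invFun := fun S => ⟨insertOne cell r₀ c₀ S.1, S.2.insertOne_of_eraseCell h₀ hleft habove,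
        by simp [insertOne]⟩
      left_inv := fun ⟨T, hT, h1⟩ => Subtype.ext (funext₂ fun r c => ?_)
      right_inv := fun ⟨S, hS⟩ => Subtype.ext (funext₂ fun r c => ?_) }
  · by_cases h : r = r₀ ∧ c = c₀
    · obtain ⟨rfl, rfl⟩ := h
      simp [insertOne, h1]
    · by_cases hc : cell r c
      · have := (hT.2.1 r c hc).1
        simp only [insertOne, h, hc, if_false, if_true]
        omega
      · simp [insertOne, h, hc, hT.1 r c hc]
  · by_cases h : r = r₀ ∧ c = c₀
    · obtain ⟨rfl, rfl⟩ := h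
      simp [insertOne, hS.1 r c (fun hc => hc.2 ⟨rfl, rfl⟩)]
    · by_cases hc : cell r c
      · simp [insertOne, h, hc]
      · simp [insertOne, h, hc, hS.1 r c (fun h' => hc h'.1)]

theorem finite_setOf_isTableauOn (N R C : ℕ) (hbound : ∀ r c, cell r c → r < R ∧ c < C) :
    {T | IsTableauOn cell N T}.Finite := by
  refine Set.Finite.of_finite_image (f := fun T (p : Fin R × Fin C) =>
    (⟨min (T p.1 p.2) N, by omega⟩ : Fin (N + 1))) (Set.toFinite _) fun T hT T' hT' h => ?_
  funext r c
  by_cases hc : cell r c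
  · have hrc := congrArg Fin.val (congrFun h (⟨r, (hbound r c hc).1⟩, ⟨c, (hbound r c hc).2⟩))
    have := (hT.2.1 r c hc).2
    have := (hT'.2.1 r c hc).2
    simp only at hrc
    omega
  · rw [hT.1 r c hc, hT'.1 r c hc]

theorem card_tableauOn_of_empty (hempty : ∀ r c, ¬ cell r c) :
    Nat.card {T // IsTableauOn cell 0 T} = 1 := by
  refine Nat.card_eq_one_iff_exists.mpr ⟨⟨0, ?_⟩, fun ⟨T, hT⟩ => ?_⟩
  · refine ⟨fun _ _ _ => rfl, ?_, ?_, fun v h1 h0 => by omega, ?_, ?_⟩ <;>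
      intros <;> simp_all
  · exact Subtype.ext (funext₂ fun r c => hT.1 r c (hempty r c))

theorem card_tableauOn_eq_sum {ι : Type*} [Fintype ι] (N : ℕ)
    (hfin : {T | IsTableauOn cell N T}.Finite) (pos : ι → ℕ × ℕ) (hpos : Injective pos)
    (hone : ∀ T, IsTableauOn cell N T → ∃ i, T (pos i).1 (pos i).2 = 1) :
    Nat.card {T // IsTableauOn cell N T}
      = ∑ i, Nat.card {T // IsTableauOn cell N T ∧ T (pos i).1 (pos i).2 = 1} := by
  set S : ι → Set (ℕ → ℕ → ℕ) := fun i => {T | IsTableauOn cell N T ∧ T (pos i).1 (pos i).2 = 1}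
  have hunion : {T | IsTableauOn cell N T} = ⋃ i, S i := by
    ext T
    simp only [S, Set.mem_ofPred_eq, Set.mem_iUnion]
    exact ⟨fun hT => (hone T hT).imp fun _ h => ⟨hT, h⟩, fun ⟨_, hT, _⟩ => hT⟩
  have hdisj : Pairwise (Disjoint on S) := fun i j hij =>
    Set.disjoint_left.mpr fun T ⟨hT, hi⟩ ⟨_, hj⟩ => hij <| hpos <| Prod.ext_iff.mpr <|
      hT.2.2.1 _ _ _ _ (hT.cell_of_eq_one hi) (hT.cell_of_eq_one hj) (hi.trans hj.symm)
  calc Nat.card {T // IsTableauOn cell N T} = {T | IsTableauOn cell N T}.ncard :=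
        Nat.card_coe_set_eq _
    _ = ∑ i, (S i).ncard := by
        rw [hunion, Set.ncard_iUnion_of_finite (fun i => hfin.subset fun T hT => hT.1) hdisj,
          finsum_eq_sum_of_fintype]
    _ = _ := Finset.sum_congr rfl fun i _ => (Nat.card_coe_set_eq _).symm

end Counting

theorem Finset.sum_update_add_one {ι : Type*} [Fintype ι] [DecidableEq ι] (m : ι → ℕ) (i : ι) :
    ∑ j, update m i (m i + 1) j = ∑ j, m j + 1 := by
  rw [Finset.sum_update_of_mem (Finset.mem_univ i),
    Finset.sum_eq_add_sum_sdiff_singleton_of_mem (Finset.mem_univ i)]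
  ring

theorem antitone_update_add_one {ι : Type*} [LinearOrder ι] {m : ι → ℕ} (hm : Antitone m)
    {i : ι} (hi : ∀ j < i, m i < m j) : Antitone (update m i (m i + 1)) := by
  intro a b hab
  simp only [update_apply]
  split_ifs with hb ha ha
  · rfl
  · subst hb
    have := hi a (lt_of_le_of_ne hab ha)
    omega
  · subst ha
    have := hm hab
    omega
  · exact hm hab

section SkewShapes

theorem skewCell_append_replicate_zero (l m : List ℕ) (k : ℕ) :
    skewCell l (m ++ List.replicate k 0) = skewCell l m := by
  funext r c
  simp only [skewCell, List.getD_eq_getElem?_getD, List.getElem?_append]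
  split_ifs with hr
  · rfl
  · rw [List.getElem?_eq_none (not_lt.mp hr), List.getElem?_replicate]
    split_ifs <;> rfl

theorem skewSYTCount_append_replicate_zero (l m : List ℕ) (k : ℕ) :
    skewSYTCount l (m ++ List.replicate k 0) = skewSYTCount l m := by
  simp [skewSYTCount, IsSkewSYT, skewCell_append_replicate_zero]

variable {k : ℕ} {l m : Fin k → ℕ}

theorem skewCell_ofFn_iff {r c : ℕ} :
    skewCell (List.ofFn l) (List.ofFn m) r c ↔ ∃ h : r < k, m ⟨r, h⟩ ≤ c ∧ c < l ⟨r, h⟩ := by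
  by_cases hr : r < k <;> simp [skewCell, List.getD_eq_getElem?_getD, hr]

theorem skewCell_ofFn_row (i : Fin k) (c : ℕ) :
    skewCell (List.ofFn l) (List.ofFn m) i c ↔ m i ≤ c ∧ c < l i := by
  simp [skewCell_ofFn_iff]

theorem skewSYTCount_ofFn {N : ℕ} (hN : ∑ i, m i + N = ∑ i, l i) :
    skewSYTCount (List.ofFn l) (List.ofFn m)
      = Nat.card {T // IsTableauOn (skewCell (List.ofFn l) (List.ofFn m)) N T} := by
  simp only [skewSYTCount, IsSkewSYT, List.sum_ofFn]
  congr!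
  omega

theorem eraseCell_skewCell_ofFn (i : Fin k) :
    eraseCell (skewCell (List.ofFn l) (List.ofFn m)) i (m i)
      = skewCell (List.ofFn l) (List.ofFn (update m i (m i + 1))) := by
  funext r c
  apply propext
  simp only [eraseCell, skewCell_ofFn_iff]
  by_cases hr : r < k
  · obtain rfl | hne := eq_or_ne (⟨r, hr⟩ : Fin k) i
    · simp only [hr, exists_true_left, update_self, true_and]
      omega
    · have hri : r ≠ i := fun h => hne (Fin.ext h)
      simp [hr, update_of_ne hne, hri]
  · simp [hr]

theorem exists_eq_one_at_row_start {N : ℕ} {T : ℕ → ℕ → ℕ}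
    (hT : IsTableauOn (skewCell (List.ofFn l) (List.ofFn m)) (N + 1) T) :
    ∃ i : Fin k, T i (m i) = 1 := by
  obtain ⟨r, c, hc, h1⟩ := hT.2.2.2.1 1 le_rfl (by omega)
  obtain ⟨hr, hmc, hcl⟩ := skewCell_ofFn_iff.mp hc
  refine ⟨⟨r, hr⟩, ?_⟩
  obtain rfl | hlt := hmc.eq_or_lt
  · exact h1
  · obtain ⟨c, rfl⟩ := Nat.exists_eq_add_one_of_ne_zero (by omega : c ≠ 0)
    exact absurd (skewCell_ofFn_iff.mpr ⟨hr, by omega, by omega⟩) (hT.not_cell_left_of_eq_one h1)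

theorem card_skewTableau_eq_sum (N : ℕ) :
    Nat.card {T // IsTableauOn (skewCell (List.ofFn l) (List.ofFn m)) (N + 1) T}
      = ∑ i : Fin k, Nat.card {T // IsTableauOn (skewCell (List.ofFn l) (List.ofFn m)) (N + 1) T ∧
          T i (m i) = 1} := by
  refine card_tableauOn_eq_sum _ _ ?_ (fun i : Fin k => ((i : ℕ), m i))
    (fun i j h => Fin.ext (congrArg Prod.fst h)) fun T hT => exists_eq_one_at_row_start hT
  refine finite_setOf_isTableauOn _ _ k (∑ i, l i) fun r c hc => ?_
  obtain ⟨hr, -, hcl⟩ := skewCell_ofFn_iff.mp hc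
  exact ⟨hr, hcl.trans_le (Finset.single_le_sum (fun _ _ => Nat.zero_le _) (Finset.mem_univ _))⟩

theorem card_eq_one_at_row_of_removable (N : ℕ) (i : Fin k) (hi : m i < l i)
    (habove : ∀ j < i, m i < m j) :
    Nat.card {T // IsTableauOn (skewCell (List.ofFn l) (List.ofFn m)) (N + 1) T ∧ T i (m i) = 1}
      = Nat.card {T // IsTableauOn
          (skewCell (List.ofFn l) (List.ofFn (update m i (m i + 1)))) N T} := by
  rw [← eraseCell_skewCell_ofFn]
  refine card_tableauOn_eq_one_eq _ _ _ _ ((skewCell_ofFn_row i _).mpr ⟨le_rfl, hi⟩)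
    (fun c hc h => by have := ((skewCell_ofFn_row i c).mp h).1; omega) fun r hr h => ?_
  obtain ⟨hrk, h1, -⟩ := skewCell_ofFn_iff.mp h
  have := habove ⟨r, hrk⟩ (by rw [Fin.lt_def, Fin.val_mk]; omega)
  omega

theorem card_eq_one_at_row_eq_zero_of_full (N : ℕ) (i : Fin k) (hi : m i = l i) :
    Nat.card {T // IsTableauOn (skewCell (List.ofFn l) (List.ofFn m)) N T ∧ T i (m i) = 1} = 0 :=
  Nat.card_eq_zero.mpr <| Or.inl ⟨fun ⟨T, hT, h1⟩ => by
    have := ((skewCell_ofFn_row i _).mp (hT.cell_of_eq_one h1)).2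
    omega⟩

theorem card_eq_one_at_row_eq_zero_of_above (N : ℕ) (i j : Fin k) (hji : (j : ℕ) + 1 = i)
    (hmj : m j ≤ m i) (hlj : m i < l j) :
    Nat.card {T // IsTableauOn (skewCell (List.ofFn l) (List.ofFn m)) N T ∧ T i (m i) = 1} = 0 :=
  Nat.card_eq_zero.mpr <| Or.inl ⟨fun ⟨T, hT, h1⟩ => by
    rw [← hji] at h1
    exact hT.not_cell_above_of_eq_one h1 ((skewCell_ofFn_row j _).mpr ⟨hmj, hlj⟩)⟩

end SkewShapes

theorem Matrix.det_fin_three_eq_zero_of_zero_block {R : Type*} [CommRing R]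
    (A : Matrix (Fin 3) (Fin 3) R) (i : Fin 3) (h : ∀ r j, j ≤ i → i ≤ r → A r j = 0) :
    A.det = 0 := by
  rw [Matrix.det_fin_three]
  fin_cases i
  · simp [h 0 0 (by decide) (by decide), h 1 0 (by decide) (by decide),
      h 2 0 (by decide) (by decide)]
  · simp [h 1 0 (by decide) (by decide), h 1 1 (by decide) (by decide),
      h 2 0 (by decide) (by decide), h 2 1 (by decide) (by decide)]
  · simp [h 2 0 (by decide) (by decide), h 2 1 (by decide) (by decide),
      h 2 2 (by decide) (by decide)]

noncomputable def invFact (k : ℤ) : ℚ := if 0 ≤ k then ((k.toNat)! : ℚ)⁻¹ else 0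

theorem invFact_natCast (k : ℕ) : invFact k = ((k ! : ℕ) : ℚ)⁻¹ := by simp [invFact]

theorem invFact_of_neg {k : ℤ} (h : k < 0) : invFact k = 0 := by simp [invFact, not_le.mpr h]

theorem invFact_sub_one (k : ℤ) : invFact (k - 1) = k * invFact k := by
  rcases lt_trichotomy k 0 with h | rfl | h
  · rw [invFact_of_neg (by omega), invFact_of_neg h, mul_zero]
  · simp [invFact_of_neg]
  · obtain ⟨k, rfl⟩ : ∃ m : ℕ, k = ((m + 1 : ℕ) : ℤ) := ⟨(k - 1).toNat, by omega⟩
    rw [show ((k + 1 : ℕ) : ℤ) - 1 = k by omega, invFact_natCast, invFact_natCast,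
      Nat.factorial_succ]
    push_cast
    field_simp

noncomputable def aitkenMatrix (x y : Fin 3 → ℤ) : Matrix (Fin 3) (Fin 3) ℚ :=
  Matrix.of fun i j => invFact (x i - y j)

/-- Raising `y_j` multiplies column `j` entrywise by `x_i - y_j`; by multilinearity the `x`-parts
sum to `(∑ x) · det` (a trace identity) and the `y`-parts to `(∑ y) · det`. -/
theorem sum_det_aitkenMatrix_update (x y : Fin 3 → ℤ) :
    ∑ j, (aitkenMatrix x (update y j (y j + 1))).det
      = (∑ i, x i - ∑ j, y j) * (aitkenMatrix x y).det := by
  have shift : ∀ a b : ℤ, invFact (a - (b + 1)) = (a - b) * invFact (a - b) := fun a b => by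
    rw [show a - (b + 1) = a - b - 1 by ring, invFact_sub_one]
    push_cast
    ring
  simp only [aitkenMatrix, update_apply, Matrix.det_fin_three, Matrix.of_apply,
    Finset.sum_sub_distrib, Fin.sum_univ_three, ↓reduceIte, shift, one_ne_zero, Fin.reduceEq,
    zero_ne_one, Int.cast_add]
  ring

def shifted {k : ℕ} (m : Fin k → ℕ) (i : Fin k) : ℤ := m i - i

theorem shifted_update_add_one {k : ℕ} (m : Fin k → ℕ) (i : Fin k) :
    shifted (update m i (m i + 1)) = update (shifted m) i (shifted m i + 1) := by
  funext j
  obtain rfl | hji := eq_or_ne j i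
  · simp only [shifted, update_self, Nat.cast_add, Nat.cast_one]
    ring
  · simp [shifted, update_of_ne hji]

theorem det_aitkenMatrix_self {l : Fin 3 → ℕ} (hl : Antitone l) :
    (aitkenMatrix (shifted l) (shifted l)).det = 1 := by
  have upper : (aitkenMatrix (shifted l) (shifted l)).IsUpperTriangular :=
    fun r j (hjr : j < r) => by
      have := hl hjr.le
      have : (j : ℕ) < r := hjr
      exact invFact_of_neg (by simp only [shifted]; omega)
  rw [Matrix.det_of_isUpperTriangular upper]
  simp [aitkenMatrix, invFact]

section ThreeRows

variable {l m : Fin 3 → ℕ}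

theorem det_aitkenMatrix_update_eq_zero_of_full (hl : Antitone l) (hm : Antitone m) {i : Fin 3}
    (hfull : m i = l i) :
    (aitkenMatrix (shifted l) (update (shifted m) i (shifted m i + 1))).det = 0 := by
  refine Matrix.det_fin_three_eq_zero_of_zero_block _ i fun r j hj hr => invFact_of_neg ?_
  have := hl hr
  have := hm hj
  obtain rfl | hj := hj.eq_or_lt
  · simp only [shifted, update_self]
    omega
  · have : (j : ℕ) < i := hj
    simp only [shifted, update_of_ne hj.ne]
    omega

theorem det_aitkenMatrix_update_eq_zero_of_above {i j : Fin 3} (hji : (j : ℕ) + 1 = i)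
    (hmj : m j = m i) :
    (aitkenMatrix (shifted l) (update (shifted m) i (shifted m i + 1))).det = 0 := by
  have hne : j ≠ i := fun h => by rw [h] at hji; omega
  refine Matrix.det_zero_of_column_eq hne fun r => ?_
  simp only [aitkenMatrix, Matrix.of_apply, update_of_ne hne, update_self, shifted]
  congr 2
  omega

theorem card_eq_one_at_row_eq_factorial_mul_det (hl : Antitone l) (hm : Antitone m) (hml : m ≤ l)
    {N : ℕ} (ih : ∀ m' : Fin 3 → ℕ, Antitone m' → m' ≤ l → ∑ i, m' i + N = ∑ i, l i →
      (skewSYTCount (List.ofFn l) (List.ofFn m') : ℚ)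
        = N ! * (aitkenMatrix (shifted l) (shifted m')).det)
    (hN : ∑ i, m i + (N + 1) = ∑ i, l i) (i : Fin 3) :
    (Nat.card {T // IsTableauOn (skewCell (List.ofFn l) (List.ofFn m)) (N + 1) T ∧
        T i (m i) = 1} : ℚ)
      = N ! * (aitkenMatrix (shifted l) (update (shifted m) i (shifted m i + 1))).det := by
  by_cases hfull : m i = l i
  · rw [card_eq_one_at_row_eq_zero_of_full _ i hfull,
      det_aitkenMatrix_update_eq_zero_of_full hl hm hfull]
    simp
  have hi : m i < l i := lt_of_le_of_ne (hml i) hfull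
  by_cases hrem : ∀ j < i, m i < m j
  · have hsum : ∑ j, update m i (m i + 1) j + N = ∑ j, l j := by
      rw [Finset.sum_update_add_one]
      omega
    have hle : update m i (m i + 1) ≤ l := fun j => by
      obtain rfl | hj := eq_or_ne j i
      · simpa using hi
      · simpa [update_of_ne hj] using hml j
    rw [card_eq_one_at_row_of_removable N i hi hrem, ← skewSYTCount_ofFn hsum,
      ih _ (antitone_update_add_one hm hrem) hle hsum, shifted_update_add_one]
  push Not at hrem
  obtain ⟨j, hji, hmj⟩ := hrem
  have hji : (j : ℕ) < i := hji
  let j' : Fin 3 := ⟨i - 1, by omega⟩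
  have hj' : (j' : ℕ) + 1 = i := by simp only [j']; omega
  have hmj' : m j' = m i :=
    le_antisymm (hmj.trans' (hm (Fin.le_def.mpr (by simp only [j']; omega))))
      (hm (Fin.le_def.mpr (by omega)))
  rw [card_eq_one_at_row_eq_zero_of_above (N + 1) i j' hj' hmj'.le
      (hi.trans_le (hl (Fin.le_def.mpr (by omega)))),
    det_aitkenMatrix_update_eq_zero_of_above hj' hmj']
  simp

theorem skewSYTCount_ofFn_eq_factorial_mul_det (hl : Antitone l) (hm : Antitone m) (hml : m ≤ l)
    {N : ℕ} (hN : ∑ i, m i + N = ∑ i, l i) :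
    (skewSYTCount (List.ofFn l) (List.ofFn m) : ℚ)
      = N ! * (aitkenMatrix (shifted l) (shifted m)).det := by
  induction N generalizing m with
  | zero =>
    have hsum : ∑ i, m i = ∑ i, l i := by simpa using hN
    obtain rfl : m = l := funext fun i =>
      (Finset.sum_eq_sum_iff_of_le fun i _ => hml i).mp hsum i (Finset.mem_univ i)
    rw [skewSYTCount_ofFn hN, card_tableauOn_of_empty, det_aitkenMatrix_self hl]
    · simp
    intro r c h
    obtain ⟨hr, h₁, h₂⟩ := skewCell_ofFn_iff.mp h
    omega
  | succ N ih =>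
    have hsum : ∑ i, shifted l i - ∑ j, shifted m j = N + 1 := by
      have := congrArg (Nat.cast : ℕ → ℤ) hN
      push_cast at this
      simp only [shifted, Finset.sum_sub_distrib]
      linarith
    rw [skewSYTCount_ofFn hN, card_skewTableau_eq_sum, Nat.cast_sum]
    simp_rw [card_eq_one_at_row_eq_factorial_mul_det hl hm hml (fun m' => ih) hN]
    rw [← Finset.mul_sum, sum_det_aitkenMatrix_update, ← Int.cast_sub, hsum, Nat.factorial_succ]
    push_cast
    ring

end ThreeRows

theorem factorial_mul_det_aitkenMatrix (a b : ℕ) :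
    ((2 * (a + b + 1) + 1) ! : ℚ)
        * (aitkenMatrix (shifted ![a + b + 1, a + b + 1, b + 1]) (shifted ![b, 0, 0])).det
      = (2 * (a + b + 1) + 1).choose (a + b) * (a + b).choose b := by
  have entries : aitkenMatrix (shifted ![a + b + 1, a + b + 1, b + 1]) (shifted ![b, 0, 0])
      = !![((a + 1) ! : ℚ)⁻¹, ((a + b + 2) ! : ℚ)⁻¹, ((a + b + 3) ! : ℚ)⁻¹;
          (a ! : ℚ)⁻¹, ((a + b + 1) ! : ℚ)⁻¹, ((a + b + 2) ! : ℚ)⁻¹;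
          0, (b ! : ℚ)⁻¹, ((b + 1) ! : ℚ)⁻¹] := by
    ext r j
    fin_cases r <;> fin_cases j <;>
      simp [aitkenMatrix, shifted] <;>
      first
      | exact invFact_of_neg (by omega)
      | exact (congrArg invFact (by push_cast; ring)).trans (invFact_natCast _)
  have binom₁ := Nat.choose_mul_factorial_mul_factorial (show a + b ≤ 2 * (a + b + 1) + 1 by omega)
  have binom₂ := Nat.choose_mul_factorial_mul_factorial (show b ≤ a + b by omega)
  rw [show 2 * (a + b + 1) + 1 - (a + b) = a + b + 3 by omega] at binom₁
  rw [Nat.add_sub_cancel] at binom₂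
  rw [entries, Matrix.det_fin_three]
  simp only [Matrix.of_apply, Matrix.cons_val', Matrix.cons_val_zero, Matrix.cons_val_fin_one,
    Matrix.cons_val_one, Matrix.cons_val, mul_zero, add_zero, sub_zero]
  rw [← binom₁, ← binom₂]
  simp only [show a + b + 3 = a + b + 2 + 1 by rfl, show a + b + 2 = a + b + 1 + 1 by rfl,
    Nat.factorial_succ]
  push_cast
  field_simp
  ring

theorem skewSYTCount_nni_general (n i : ℕ) (hi1 : 1 ≤ i) (hi2 : i ≤ n) :
    skewSYTCount [n, n, i] [i - 1] = (2 * n + 1).choose (n - 1) * (n - 1).choose (i - 1) := by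
  obtain ⟨b, rfl⟩ : ∃ b, i = b + 1 := ⟨i - 1, by omega⟩
  obtain ⟨a, rfl⟩ : ∃ a, n = a + b + 1 := ⟨n - b - 1, by omega⟩
  have hshape : skewSYTCount [a + b + 1, a + b + 1, b + 1] [b]
      = skewSYTCount (List.ofFn ![a + b + 1, a + b + 1, b + 1]) (List.ofFn ![b, 0, 0]) := by
    rw [← skewSYTCount_append_replicate_zero _ [b] 2]
    rfl
  have hl : Antitone ![a + b + 1, a + b + 1, b + 1] := by
    simp [Fin.antitone_iff_succ_le, Fin.forall_fin_two]
  have hm : Antitone ![b, 0, 0] := by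
    simp [Fin.antitone_iff_succ_le, Fin.forall_fin_two]
  have hml : ![b, 0, 0] ≤ ![a + b + 1, a + b + 1, b + 1] := by
    simp only [Pi.le_def, Fin.forall_fin_succ, Fin.isValue, Matrix.cons_val_zero,
      Matrix.cons_val_succ, IsEmpty.forall_iff, and_true]
    omega
  have hcount := skewSYTCount_ofFn_eq_factorial_mul_det hl hm hml (N := 2 * (a + b + 1) + 1)
    (by simp only [Fin.sum_univ_three, Matrix.cons_val_zero, Matrix.cons_val_one, Matrix.cons_val]
        ring)
  rw [factorial_mul_det_aitkenMatrix, ← hshape] at hcount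
  simp only [Nat.add_sub_cancel]
  exact_mod_cast hcount

/-- `f^{(n,n,i)/(i-1)} = binom(2n+1, n-1) · binom(n-1, i-1)`. -/
theorem skewSYTCount_nni (n i : ℕ) (hn : 1 ≤ n) (hi1 : 1 ≤ i) (hi2 : i ≤ n) :
    skewSYTCount [n, n, i] [i - 1] = (2 * n + 1).choose (n - 1) * (n - 1).choose (i - 1) :=
  skewSYTCount_nni_general n i hi1 hi2
end
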